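/- Let p > 0 and let H : [0,∞) → ℝ be absolutely continuous with H(x) → 0 as x → ∞, with H and h := −H′ both in L²([0,∞)), and let A^p_k = ⟨H, L^p_k⟩ and c^p_k = ⟨h, L^p_k⟩ denote their coefficients in the scaled Laguerre basis. Then for every k ≥ 0, c^p_k = √(2p) H(0) − 2p Σ_{i=0}^{k−1} A^p_i − p A^p_k. -/

import Mathlib

open MeasureTheory Set

/-- The Laguerre polynomial `P_k(t) = ∑_{i=0}^k binom(k, k-i) (-t)^i / i!`. -/
noncomputable def lagPoly (k : ℕ) (t : ℝ) : ℝ :=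
  ∑ i ∈ Finset.range (k + 1), (k.choose (k - i) : ℝ) * (-t) ^ i / (Nat.factorial i : ℝ)

/-- The scaled Laguerre function `L^p_k(t) = √(2p) P_k(2pt) e^{-pt}`. -/
noncomputable def lagFun (p : ℝ) (k : ℕ) (t : ℝ) : ℝ :=
  Real.sqrt (2 * p) * lagPoly k (2 * p * t) * Real.exp (-(p * t))

/-! ### Auxiliary definitions -/

/-- Bounding constant for `lagFun`. -/
noncomputable def lagC (p : ℝ) (k : ℕ) : ℝ :=
  Real.sqrt (2 * p) * ∑ i ∈ Finset.range (k + 1), (k.choose (k - i) : ℝ) * 4 ^ i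

/-- The derivative of `lagFun p k`. -/
noncomputable def lagD (p : ℝ) (k : ℕ) (t : ℝ) : ℝ :=
  -(p * lagFun p k t) - 2 * p * ∑ i ∈ Finset.range k, lagFun p i t

/-- Bounding constant for `lagD`. -/
noncomputable def lagDC (p : ℝ) (k : ℕ) : ℝ :=
  p * lagC p k + 2 * p * ∑ i ∈ Finset.range k, lagC p i

/-! ### Elementary lemmas -/

lemma lagPoly_zero (k : ℕ) : lagPoly k 0 = 1 := by
  rw [lagPoly, Finset.sum_eq_single 0]
  · simp
  · intro i _ hi; simp [zero_pow hi]
  · simp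

lemma sum_lagPoly (k : ℕ) (t : ℝ) :
    ∑ n ∈ Finset.range k, lagPoly n t
      = ∑ j ∈ Finset.range k, (k.choose (k - 1 - j) : ℝ) * (-t) ^ j / (Nat.factorial j : ℝ) := by
  induction k with
  | zero => simp
  | succ k ih =>
    rw [Finset.sum_range_succ, ih, lagPoly, Finset.sum_range_succ, Finset.sum_range_succ]
    have key : ∑ j ∈ Finset.range k, (k.choose (k - 1 - j) : ℝ) * (-t) ^ j / (Nat.factorial j : ℝ)
         + ∑ i ∈ Finset.range k, (k.choose (k - i) : ℝ) * (-t) ^ i / (Nat.factorial i : ℝ)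
         = ∑ j ∈ Finset.range k, ((k+1).choose (k + 1 - 1 - j) : ℝ) * (-t) ^ j / (Nat.factorial j : ℝ) := by
      rw [← Finset.sum_add_distrib]
      apply Finset.sum_congr rfl
      intro j hj
      have hj' : j < k := Finset.mem_range.mp hj
      have h1 : k + 1 - 1 - j = (k - 1 - j) + 1 := by omega
      have h2 : k - j = (k - 1 - j) + 1 := by omega
      rw [h1, h2, Nat.choose_succ_succ]
      push_cast
      ring
    rw [← add_assoc, key]
    congr 1
    have e1 : k - k = 0 := by omega
    have e2 : k + 1 - 1 - k = 0 := by omega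
    simp [e1, e2]

lemma hasDerivAt_lagPoly (k : ℕ) (t : ℝ) :
    HasDerivAt (lagPoly k)
      (-∑ j ∈ Finset.range k, (k.choose (k - 1 - j) : ℝ) * (-t) ^ j / (Nat.factorial j : ℝ)) t := by
  have h1 : ∀ i : ℕ, HasDerivAt (fun s : ℝ => (-s) ^ i) (-(i * (-t) ^ (i - 1))) t := by
    intro i
    have := (hasDerivAt_pow i (-t)).comp t (hasDerivAt_neg t)
    simpa [mul_comm, Function.comp_def] using this
  have h2 : HasDerivAt (lagPoly k)
      (∑ i ∈ Finset.range (k+1),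
        (k.choose (k - i) : ℝ) * (-(i * (-t) ^ (i - 1))) / (Nat.factorial i : ℝ)) t := by
    apply HasDerivAt.fun_sum
    intro i _
    exact ((h1 i).const_mul _).div_const _
  convert h2 using 1
  rw [Finset.sum_range_succ']
  simp only [Nat.cast_zero, zero_mul, neg_zero, mul_zero, zero_div, add_zero]
  rw [← Finset.sum_neg_distrib]
  apply Finset.sum_congr rfl
  intro j _
  have : (Nat.factorial (j+1) : ℝ) = (j+1) * Nat.factorial j := by
    push_cast [Nat.factorial_succ]; ring
  simp only [Nat.add_sub_cancel, this]
  have hj : (Nat.factorial j : ℝ) ≠ 0 := Nat.cast_ne_zero.mpr (Nat.factorial_ne_zero j)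
  field_simp
  rw [show k - (j+1) = k - 1 - j by omega]
  push_cast
  ring

lemma hasDerivAt_lagFun (p : ℝ) (k : ℕ) (t : ℝ) :
    HasDerivAt (lagFun p k) (lagD p k t) t := by
  unfold lagD
  have hid : HasDerivAt (fun s : ℝ => 2 * p * s) (2 * p) t := by
    simpa using (hasDerivAt_id t).const_mul (2 * p)
  have hcomp : HasDerivAt (fun s : ℝ => lagPoly k (2 * p * s))
      ((-∑ j ∈ Finset.range k, (k.choose (k - 1 - j) : ℝ) * (-(2*p*t)) ^ j / (Nat.factorial j : ℝ)) * (2 * p)) t :=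
    (hasDerivAt_lagPoly k (2 * p * t)).comp t hid
  have hexp : HasDerivAt (fun s : ℝ => Real.exp (-(p * s))) (Real.exp (-(p * t)) * (-p)) t := by
    have hlin : HasDerivAt (fun s : ℝ => -(p * s)) (-p) t := by
      simpa [Pi.neg_def] using ((hasDerivAt_id t).const_mul p).neg
    exact (Real.hasDerivAt_exp _).comp t hlin
  have hmain : HasDerivAt (lagFun p k) _ t :=
    ((hcomp.const_mul (Real.sqrt (2 * p))).fun_mul hexp)
  convert hmain using 1
  have hs := sum_lagPoly k (2 * p * t)
  simp only [lagFun]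
  rw [← hs, neg_mul, mul_neg, neg_mul, Finset.sum_mul, sub_eq_add_neg, add_comm]
  congr 1
  · congr 1
    simp only [Finset.mul_sum, Finset.sum_mul]
    exact Finset.sum_congr rfl (fun i _ => by ring)
  · ring

lemma lagC_nonneg (p : ℝ) (k : ℕ) : 0 ≤ lagC p k := by
  apply mul_nonneg (Real.sqrt_nonneg _)
  apply Finset.sum_nonneg
  intro i _
  positivity

lemma lagFun_le (p : ℝ) (hp : 0 < p) (k : ℕ) {t : ℝ} (ht : 0 ≤ t) :
    |lagFun p k t| ≤ lagC p k * Real.exp (-(p / 2) * t) := by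
  have h1 : |lagPoly k (2 * p * t)|
      ≤ (∑ i ∈ Finset.range (k + 1), (k.choose (k - i) : ℝ) * 4 ^ i) * Real.exp (p / 2 * t) := by
    rw [lagPoly]
    calc |∑ i ∈ Finset.range (k + 1), (k.choose (k - i) : ℝ) * (-(2 * p * t)) ^ i / (Nat.factorial i : ℝ)|
        ≤ ∑ i ∈ Finset.range (k + 1), |(k.choose (k - i) : ℝ) * (-(2 * p * t)) ^ i / (Nat.factorial i : ℝ)| :=
          Finset.abs_sum_le_sum_abs _ _
      _ ≤ ∑ i ∈ Finset.range (k + 1), (k.choose (k - i) : ℝ) * 4 ^ i * Real.exp (p / 2 * t) := by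
          apply Finset.sum_le_sum
          intro i _
          rw [abs_div, abs_mul, abs_pow, abs_neg]
          have hx : |(2 : ℝ) * p * t| = 2 * p * t := abs_of_nonneg (by positivity)
          rw [hx, abs_of_nonneg (by positivity : (0:ℝ) ≤ (k.choose (k - i) : ℝ)),
            abs_of_nonneg (by positivity : (0:ℝ) ≤ (Nat.factorial i : ℝ))]
          have key : (p / 2 * t) ^ i / (Nat.factorial i : ℝ) ≤ Real.exp (p / 2 * t) :=
            Real.pow_div_factorial_le_exp _ (by positivity) i
          have h2 : (2 * p * t) ^ i = 4 ^ i * (p / 2 * t) ^ i := by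
            rw [← mul_pow]; congr 1; ring
          rw [h2, mul_div_assoc, mul_div_assoc]
          calc (k.choose (k - i) : ℝ) * (4 ^ i * ((p / 2 * t) ^ i / (Nat.factorial i : ℝ)))
              ≤ (k.choose (k - i) : ℝ) * (4 ^ i * Real.exp (p / 2 * t)) := by
                apply mul_le_mul_of_nonneg_left _ (by positivity)
                exact mul_le_mul_of_nonneg_left key (by positivity)
            _ = (k.choose (k - i) : ℝ) * 4 ^ i * Real.exp (p / 2 * t) := by ring
      _ = (∑ i ∈ Finset.range (k + 1), (k.choose (k - i) : ℝ) * 4 ^ i) * Real.exp (p / 2 * t) := by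
          rw [Finset.sum_mul]
  have hexp : Real.exp (p / 2 * t) * Real.exp (-(p * t)) = Real.exp (-(p / 2) * t) := by
    rw [← Real.exp_add]; congr 1; ring
  calc |lagFun p k t| = Real.sqrt (2 * p) * |lagPoly k (2 * p * t)| * Real.exp (-(p * t)) := by
        rw [lagFun, abs_mul, abs_mul, abs_of_nonneg (Real.sqrt_nonneg _),
          abs_of_nonneg (Real.exp_nonneg _)]
    _ ≤ Real.sqrt (2 * p) * ((∑ i ∈ Finset.range (k + 1), (k.choose (k - i) : ℝ) * 4 ^ i) * Real.exp (p / 2 * t)) * Real.exp (-(p * t)) := by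
        apply mul_le_mul_of_nonneg_right _ (Real.exp_nonneg _)
        exact mul_le_mul_of_nonneg_left h1 (Real.sqrt_nonneg _)
    _ = lagC p k * (Real.exp (p / 2 * t) * Real.exp (-(p * t))) := by rw [lagC]; ring
    _ = lagC p k * Real.exp (-(p / 2) * t) := by rw [hexp]

/-! ### Continuity, decay, integrability -/

lemma lagFun_continuous (p : ℝ) (k : ℕ) : Continuous (lagFun p k) :=
  continuous_iff_continuousAt.mpr fun t => (hasDerivAt_lagFun p k t).continuousAt

lemma lagFun_zero (p : ℝ) (k : ℕ) : lagFun p k 0 = Real.sqrt (2 * p) := by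
  simp [lagFun, lagPoly_zero]

lemma exp_tendsto (c : ℝ) (hc : 0 < c) (C : ℝ) :
    Filter.Tendsto (fun t : ℝ => C * Real.exp (-c * t)) Filter.atTop (nhds 0) := by
  have h1 : Filter.Tendsto (fun t : ℝ => -c * t) Filter.atTop Filter.atBot :=
    Filter.Tendsto.const_mul_atTop_of_neg (neg_lt_zero.mpr hc) Filter.tendsto_id
  have h2 := Real.tendsto_exp_atBot.comp h1
  simpa using h2.const_mul C

lemma lagFun_tendsto (p : ℝ) (hp : 0 < p) (k : ℕ) :
    Filter.Tendsto (lagFun p k) Filter.atTop (nhds 0) := by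
  apply squeeze_zero_norm' _ (exp_tendsto (p / 2) (by positivity) (lagC p k))
  filter_upwards [Filter.eventually_ge_atTop (0:ℝ)] with t ht
  simpa [Real.norm_eq_abs] using lagFun_le p hp k ht

lemma integrableOn_of_exp_bound {c C : ℝ} (hc : 0 < c) {f : ℝ → ℝ} (hf : Continuous f)
    (hbd : ∀ t, 0 ≤ t → |f t| ≤ C * Real.exp (-c * t)) : IntegrableOn f (Ioi 0) := by
  apply Integrable.mono' ((exp_neg_integrableOn_Ioi 0 hc).const_mul C)
    hf.aestronglyMeasurable.restrict
  rw [ae_restrict_iff' measurableSet_Ioi]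
  filter_upwards with t ht
  simpa [Real.norm_eq_abs] using hbd t (le_of_lt ht)

lemma memL2_of_exp_bound {c C : ℝ} (hc : 0 < c) {f : ℝ → ℝ} (hf : Continuous f)
    (hbd : ∀ t, 0 ≤ t → |f t| ≤ C * Real.exp (-c * t)) :
    MemLp f 2 (volume.restrict (Ioi (0:ℝ))) := by
  rw [memLp_two_iff_integrable_sq hf.aestronglyMeasurable.restrict]
  apply Integrable.mono' ((exp_neg_integrableOn_Ioi 0 (by positivity : 0 < 2*c)).const_mul (C^2))
    ((hf.pow 2).aestronglyMeasurable.restrict)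
  rw [ae_restrict_iff' measurableSet_Ioi]
  filter_upwards with t ht
  have h := hbd t (le_of_lt ht)
  have h2 : ‖f t ^ 2‖ = |f t| ^ 2 := by rw [Real.norm_eq_abs, abs_pow, sq_abs]
  rw [Pi.pow_apply, h2]
  have h3 : C ^ 2 * Real.exp (-(2 * c) * t) = (C * Real.exp (-c * t)) ^ 2 := by
    rw [mul_pow, ← Real.exp_nat_mul]
    ring_nf
  rw [h3]
  exact pow_le_pow_left₀ (abs_nonneg _) h 2

lemma integrable_mul_L2 {μ : Measure ℝ} {f g : ℝ → ℝ} (hf : MemLp f 2 μ) (hg : MemLp g 2 μ) :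
    Integrable (fun t => f t * g t) μ := by
  have h : (1 : ENNReal) / 1 = 1 / 2 + 1 / 2 := by
    rw [ENNReal.div_add_div_same]
    norm_num
    exact (ENNReal.div_self (by norm_num) (by norm_num)).symm
  have := (hg.smul hf : MemLp (f • g) 1 μ)
  rw [memLp_one_iff_integrable] at this
  simpa [Pi.smul_apply, smul_eq_mul, Pi.mul_def] using this

lemma lagD_continuous (p : ℝ) (k : ℕ) : Continuous (lagD p k) := by
  unfold lagD
  exact ((continuous_const.mul (lagFun_continuous p k)).neg).sub
    (continuous_const.mul (continuous_finset_sum _ fun i _ => lagFun_continuous p i))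

lemma lagD_le (p : ℝ) (hp : 0 < p) (k : ℕ) {t : ℝ} (ht : 0 ≤ t) :
    |lagD p k t| ≤ lagDC p k * Real.exp (-(p / 2) * t) := by
  unfold lagD lagDC
  calc |-(p * lagFun p k t) - 2 * p * ∑ i ∈ Finset.range k, lagFun p i t|
      ≤ |p * lagFun p k t| + |2 * p * ∑ i ∈ Finset.range k, lagFun p i t| := by
        rw [← abs_neg (p * lagFun p k t)] at *
        exact (abs_sub _ _)
    _ ≤ p * (lagC p k * Real.exp (-(p / 2) * t))
        + 2 * p * ((∑ i ∈ Finset.range k, lagC p i) * Real.exp (-(p / 2) * t)) := by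
        apply add_le_add
        · rw [abs_mul, abs_of_pos hp]
          exact mul_le_mul_of_nonneg_left (lagFun_le p hp k ht) hp.le
        · rw [abs_mul, abs_of_pos (by positivity : (0:ℝ) < 2*p)]
          apply mul_le_mul_of_nonneg_left _ (by positivity)
          calc |∑ i ∈ Finset.range k, lagFun p i t|
              ≤ ∑ i ∈ Finset.range k, |lagFun p i t| := Finset.abs_sum_le_sum_abs _ _
            _ ≤ ∑ i ∈ Finset.range k, lagC p i * Real.exp (-(p / 2) * t) :=
              Finset.sum_le_sum fun i _ => lagFun_le p hp i ht
            _ = (∑ i ∈ Finset.range k, lagC p i) * Real.exp (-(p / 2) * t) := by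
              rw [Finset.sum_mul]
    _ = (p * lagC p k + 2 * p * ∑ i ∈ Finset.range k, lagC p i) * Real.exp (-(p / 2) * t) := by
      ring

lemma lagD_integrableOn (p : ℝ) (hp : 0 < p) (k : ℕ) : IntegrableOn (lagD p k) (Ioi 0) :=
  integrableOn_of_exp_bound (by positivity : (0:ℝ) < p/2) (lagD_continuous p k)
    (fun t ht => lagD_le p hp k ht)

lemma lagD_memL2 (p : ℝ) (hp : 0 < p) (k : ℕ) :
    MemLp (lagD p k) 2 (volume.restrict (Ioi (0:ℝ))) :=
  memL2_of_exp_bound (by positivity : (0:ℝ) < p/2) (lagD_continuous p k)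
    (fun t ht => lagD_le p hp k ht)

lemma lagFun_integrableOn (p : ℝ) (hp : 0 < p) (k : ℕ) : IntegrableOn (lagFun p k) (Ioi 0) :=
  integrableOn_of_exp_bound (by positivity : (0:ℝ) < p/2) (lagFun_continuous p k)
    (fun t ht => lagFun_le p hp k ht)

lemma lagFun_memL2 (p : ℝ) (hp : 0 < p) (k : ℕ) :
    MemLp (lagFun p k) 2 (volume.restrict (Ioi (0:ℝ))) :=
  memL2_of_exp_bound (by positivity : (0:ℝ) < p/2) (lagFun_continuous p k)
    (fun t ht => lagFun_le p hp k ht)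

lemma integral_lagD (p : ℝ) (hp : 0 < p) (k : ℕ) {s : ℝ} (hs : 0 ≤ s) :
    ∫ t in Ioi s, lagD p k t = -(lagFun p k s) := by
  have h := integral_Ioi_of_hasDerivAt_of_tendsto
    (f := lagFun p k) (f' := lagD p k) (a := s)
    ((lagFun_continuous p k).continuousWithinAt)
    (fun x _ => hasDerivAt_lagFun p k x)
    ((lagD_integrableOn p hp k).mono_set (Ioi_subset_Ioi hs))
    (lagFun_tendsto p hp k)
  rw [h, zero_sub]

/-! ### Fubini step -/

lemma fubini_key (p : ℝ) (hp : 0 < p) (k : ℕ) (h : ℝ → ℝ)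
    (hh_L2 : MemLp h 2 (volume.restrict (Ioi (0:ℝ)))) :
    ∫ t in Ioi (0:ℝ), (∫ s in (0:ℝ)..t, h s) * lagD p k t
      = -∫ s in Ioi (0:ℝ), h s * lagFun p k s := by
  set μ := volume.restrict (Ioi (0:ℝ)) with hμ
  set φ := lagD p k with hφ
  set F : ℝ → ℝ → ℝ := fun s t => if s < t then h s * φ t else 0 with hF
  have hmeasS : MeasurableSet {q : ℝ × ℝ | q.1 < q.2} :=
    measurableSet_lt measurable_fst measurable_snd
  have hF_aesm : AEStronglyMeasurable (Function.uncurry F) (μ.prod μ) := by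
    have h1 : AEStronglyMeasurable (fun q : ℝ × ℝ => h q.1) (μ.prod μ) :=
      hh_L2.aestronglyMeasurable.comp_quasiMeasurePreserving Measure.quasiMeasurePreserving_fst
    have h2 : AEStronglyMeasurable (fun q : ℝ × ℝ => φ q.2) (μ.prod μ) :=
      ((lagD_continuous p k).comp continuous_snd).aestronglyMeasurable
    have h3 := (h1.mul h2).indicator hmeasS
    apply h3.congr
    filter_upwards with q
    by_cases hq : q.1 < q.2
    · simp [Function.uncurry, hF, Set.indicator_of_mem, hq, Set.mem_setOf_eq]
    · simp [Function.uncurry, hF, Set.indicator_of_notMem, hq, Set.mem_setOf_eq]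
  have int_exp4 : Integrable (fun t : ℝ => Real.exp (-(p/4) * t)) μ := by
    exact exp_neg_integrableOn_Ioi 0 (by positivity : (0:ℝ) < p/4)
  have memL2_exp4 : MemLp (fun t : ℝ => Real.exp (-(p/4) * t)) 2 μ := by
    apply memL2_of_exp_bound (by positivity : (0:ℝ) < p/4) (by continuity)
    intro t _
    rw [abs_of_pos (Real.exp_pos _), one_mul]
  have int1 : Integrable (fun s => |h s| * Real.exp (-(p/4) * s)) μ := by
    apply integrable_mul_L2 _ memL2_exp4
    simpa [Real.norm_eq_abs] using hh_L2.norm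
  have int2 : Integrable (fun t => lagDC p k * Real.exp (-(p/4) * t)) μ :=
    int_exp4.const_mul _
  have hG_int : Integrable
      (fun q : ℝ × ℝ => (|h q.1| * Real.exp (-(p/4) * q.1)) * (lagDC p k * Real.exp (-(p/4) * q.2)))
      (μ.prod μ) := int1.mul_prod int2
  have hae_mem : ∀ᵐ q ∂(μ.prod μ), q ∈ (Ioi (0:ℝ)) ×ˢ (Ioi (0:ℝ)) := by
    rw [hμ, Measure.prod_restrict]
    exact ae_restrict_mem (measurableSet_Ioi.prod measurableSet_Ioi)
  have hF_int : Integrable (Function.uncurry F) (μ.prod μ) := by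
    apply Integrable.mono' hG_int hF_aesm
    filter_upwards [hae_mem] with q hq
    obtain ⟨hq1, hq2⟩ := hq
    have hDC : 0 ≤ lagDC p k := by
      have := lagD_le p hp k (le_of_lt hq2)
      nlinarith [abs_nonneg (φ q.2), Real.exp_pos (-(p/2) * q.2)]
    by_cases hlt : q.1 < q.2
    · calc ‖Function.uncurry F q‖ = |h q.1| * |φ q.2| := by
            simp [Function.uncurry, hF, hlt, abs_mul]
        _ ≤ |h q.1| * (lagDC p k * Real.exp (-(p/2) * q.2)) :=
            mul_le_mul_of_nonneg_left (lagD_le p hp k (le_of_lt hq2)) (abs_nonneg _)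
        _ = (|h q.1| * Real.exp (-(p/4) * q.2)) * (lagDC p k * Real.exp (-(p/4) * q.2)) := by
            rw [show (-(p/2) * q.2) = (-(p/4) * q.2) + (-(p/4) * q.2) by ring, Real.exp_add]
            ring
        _ ≤ (|h q.1| * Real.exp (-(p/4) * q.1)) * (lagDC p k * Real.exp (-(p/4) * q.2)) := by
            apply mul_le_mul_of_nonneg_right _ (by positivity)
            apply mul_le_mul_of_nonneg_left _ (abs_nonneg _)
            exact Real.exp_le_exp.mpr (by nlinarith)
    · simp only [Function.uncurry, hF, hlt, if_false]
      rw [norm_zero]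
      exact mul_nonneg (mul_nonneg (abs_nonneg _) (Real.exp_pos _).le)
        (mul_nonneg hDC (Real.exp_pos _).le)
  have swap := integral_integral_swap hF_int
  have inner1 : ∀ s ∈ Ioi (0:ℝ), (∫ t, F s t ∂μ) = h s * (-(lagFun p k s)) := by
    intro s hs
    have : (fun t => F s t) = fun t => h s * (Ioi s).indicator φ t := by
      funext t
      by_cases hst : s < t
      · simp [hF, hst, Set.indicator_of_mem, Set.mem_Ioi]
      · simp [hF, hst, Set.indicator_of_notMem, Set.mem_Ioi]
    rw [this, integral_const_mul, integral_indicator measurableSet_Ioi]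
    congr 1
    rw [hμ, Measure.restrict_restrict measurableSet_Ioi,
      inter_eq_left.mpr (Ioi_subset_Ioi (le_of_lt hs))]
    exact integral_lagD p hp k (le_of_lt hs)
  have inner2 : ∀ t ∈ Ioi (0:ℝ), (∫ s, F s t ∂μ) = (∫ s in (0:ℝ)..t, h s) * φ t := by
    intro t ht
    have : (fun s => F s t) = fun s => (Iio t).indicator h s * φ t := by
      funext s
      by_cases hst : s < t
      · simp [hF, hst, Set.indicator_of_mem, Set.mem_Iio]
      · simp [hF, hst, Set.indicator_of_notMem, Set.mem_Iio]
    rw [this, integral_mul_const, integral_indicator measurableSet_Iio]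
    congr 1
    have hset : Iio t ∩ Ioi (0:ℝ) = Ioo 0 t := by ext x; simp [and_comm]
    rw [hμ, Measure.restrict_restrict measurableSet_Iio, hset,
      intervalIntegral.integral_of_le (le_of_lt ht), integral_Ioc_eq_integral_Ioo]
  have e1 : (∫ s, (∫ t, F s t ∂μ) ∂μ) = ∫ s in Ioi (0:ℝ), h s * (-(lagFun p k s)) := by
    apply integral_congr_ae
    filter_upwards [ae_restrict_mem measurableSet_Ioi] with s hs
    exact inner1 s hs
  have e2 : (∫ t, (∫ s, F s t ∂μ) ∂μ) = ∫ t in Ioi (0:ℝ), (∫ s in (0:ℝ)..t, h s) * φ t := by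
    apply integral_congr_ae
    filter_upwards [ae_restrict_mem measurableSet_Ioi] with t ht
    exact inner2 t ht
  have e3 : ∫ s in Ioi (0:ℝ), h s * (-(lagFun p k s)) = -∫ s in Ioi (0:ℝ), h s * lagFun p k s := by
    rw [← integral_neg]
    congr 1
    funext s
    ring
  rw [← e2, ← swap, e1, e3]

/-- if `H` is absolutely continuous on `[0,∞)` with derivative `-h`
(expressed through the fundamental theorem of calculus representation
`H(x) = H(0) - ∫₀^x h`), `H(x) → 0` as `x → ∞`, and `H, h ∈ L²([0,∞))`, then their
scaled Laguerre coefficients `A^p_k = ⟨H, L^p_k⟩` and `c^p_k = ⟨h, L^p_k⟩` satisfy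
`c^p_k = √(2p) H(0) - 2p ∑_{i=0}^{k-1} A^p_i - p A^p_k` for every `k`. -/
theorem laguerre_coeff_relation (p : ℝ) (hp : 0 < p) (H h : ℝ → ℝ)
    (hFTC : ∀ x : ℝ, 0 ≤ x → H x = H 0 - ∫ t in (0:ℝ)..x, h t)
    (hHlim : Filter.Tendsto H Filter.atTop (nhds 0))
    (hH_L2 : MemLp H 2 (volume.restrict (Ioi (0:ℝ))))
    (hh_L2 : MemLp h 2 (volume.restrict (Ioi (0:ℝ)))) :
    ∀ k : ℕ,
      (∫ t in Ioi (0:ℝ), h t * lagFun p k t)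
        = Real.sqrt (2 * p) * H 0
          - 2 * p * ∑ i ∈ Finset.range k, (∫ t in Ioi (0:ℝ), H t * lagFun p i t)
          - p * ∫ t in Ioi (0:ℝ), H t * lagFun p k t := by
  intro k
  have hFu := fubini_key p hp k h hh_L2
  have e1 : ∫ t in Ioi (0:ℝ), (∫ s in (0:ℝ)..t, h s) * lagD p k t
      = ∫ t in Ioi (0:ℝ), (H 0 - H t) * lagD p k t := by
    apply integral_congr_ae
    filter_upwards [ae_restrict_mem measurableSet_Ioi] with t ht
    have := hFTC t (le_of_lt ht)
    have h2 : (∫ s in (0:ℝ)..t, h s) = H 0 - H t := by linarith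
    rw [h2]
  have int_Hphi : Integrable (fun t => H t * lagD p k t) (volume.restrict (Ioi (0:ℝ))) :=
    integrable_mul_L2 hH_L2 (lagD_memL2 p hp k)
  have e2 : ∫ t in Ioi (0:ℝ), (H 0 - H t) * lagD p k t
      = H 0 * (∫ t in Ioi (0:ℝ), lagD p k t) - ∫ t in Ioi (0:ℝ), H t * lagD p k t := by
    have hpt : (fun t => (H 0 - H t) * lagD p k t)
        = fun t => H 0 * lagD p k t - H t * lagD p k t := funext fun t => by ring
    rw [hpt, integral_sub ((lagD_integrableOn p hp k).const_mul (H 0)) int_Hphi,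
      integral_const_mul]
  have e3 : ∫ t in Ioi (0:ℝ), lagD p k t = -(Real.sqrt (2 * p)) := by
    rw [integral_lagD p hp k le_rfl, lagFun_zero]
  have intHg : ∀ i : ℕ, Integrable (fun t => H t * lagFun p i t) (volume.restrict (Ioi (0:ℝ))) :=
    fun i => integrable_mul_L2 hH_L2 (lagFun_memL2 p hp i)
  have e4 : ∫ t in Ioi (0:ℝ), H t * lagD p k t
      = -(p * ∫ t in Ioi (0:ℝ), H t * lagFun p k t)
        - ∑ i ∈ Finset.range k, 2 * p * ∫ t in Ioi (0:ℝ), H t * lagFun p i t := by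
    have hpt : (fun t => H t * lagD p k t)
        = fun t => -(p * (H t * lagFun p k t))
            - ∑ i ∈ Finset.range k, 2 * p * (H t * lagFun p i t) := by
      funext t
      rw [lagD]
      rw [show (∑ i ∈ Finset.range k, 2 * p * (H t * lagFun p i t))
          = H t * (2 * p * ∑ i ∈ Finset.range k, lagFun p i t) by
        rw [Finset.mul_sum, Finset.mul_sum]
        exact Finset.sum_congr rfl fun i _ => by ring]
      ring
    have intneg : Integrable (fun t => -(p * (H t * lagFun p k t)))
        (volume.restrict (Ioi (0:ℝ))) := ((intHg k).const_mul p).neg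
    have intsum : Integrable
        (fun t => ∑ i ∈ Finset.range k, 2 * p * (H t * lagFun p i t))
        (volume.restrict (Ioi (0:ℝ))) :=
      integrable_finset_sum _ fun i _ => (intHg i).const_mul (2 * p)
    rw [hpt, integral_sub intneg intsum]
    rw [integral_neg, integral_const_mul, integral_finset_sum _ fun i _ => (intHg i).const_mul (2 * p)]
    congr 1
    exact Finset.sum_congr rfl fun i _ => integral_const_mul _ _
  rw [e1, e2, e3, e4] at hFu
  have hsum : ∑ i ∈ Finset.range k, 2 * p * ∫ t in Ioi (0:ℝ), H t * lagFun p i t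
      = 2 * p * ∑ i ∈ Finset.range k, ∫ t in Ioi (0:ℝ), H t * lagFun p i t := by
    rw [Finset.mul_sum]
  rw [hsum] at hFu
  linarith
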